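/- arXiv:1909.00658 — 7 statements merged into one kernel-verified Lean document; each statement's English description precedes it below -/
import Mathlib

section
/- Let $h \in (0,1)$ with $h \le 1/2$. Define $u_h:[0,1]\to\mathbb{R}$ to be the continuous piecewise linear function with $u_h(0)=1$, $u_h(1-h)=1$, $u_h(1)=0$ (linear on $[0,1-h]$ and on $[1-h,1]$). Then for every continuous piecewise linear $v:[0,1]\to\mathbb{R}$ on the same mesh with $v(0)=1$ and $v(1)=0$, one has $\int_0^1 |1-u_h(x)|\,dx \le \int_0^1 |1-v(x)|\,dx$. -/
open MeasureTheory

/-!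
The error `e = 1 - v` of a competitor with middle value `β` is affine on both elements, so
`∫ |e| ≥ |∫ e|` elementwise gives `∫₀¹ |e| ≥ |1 - β| (1 - h) / 2 + h |2 - β| / 2`.
For `β = 1` the error is nonnegative and this is an equality, with value `h / 2`.
Since `1 - h ≥ h`, the lower bound is at least `h (|1 - β| + |2 - β|) / 2 ≥ h / 2`.
-/

/-- Continuous piecewise linear function on the two-element mesh `{(0,1-h),(1-h,1)}`
with nodal values `a` at `0`, `b` at `1-h`, `c` at `1`. -/
noncomputable def pl2 (h a b c : ℝ) (x : ℝ) : ℝ :=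
  if x ≤ 1 - h then a + (b - a) * x / (1 - h)
  else b + (c - b) * (x - (1 - h)) / h

theorem continuous_pl2 {h : ℝ} (hh1 : h ≠ 1) (a b c : ℝ) : Continuous (pl2 h a b c) := by
  have ht : 1 - h ≠ 0 := sub_ne_zero.mpr hh1.symm
  refine Continuous.if_le (by fun_prop) (by fun_prop) continuous_id continuous_const ?_
  intro x hx
  rw [hx]
  field_simp
  ring

theorem pl2_one_one_zero_le_one {h : ℝ} (hh0 : 0 ≤ h) (x : ℝ) : pl2 h 1 1 0 x ≤ 1 := by
  rw [pl2]
  split_ifs with hx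
  · simp
  · have : 0 ≤ (x - (1 - h)) / h := div_nonneg (by linarith) hh0
    linarith [show (0 - 1) * (x - (1 - h)) / h = -((x - (1 - h)) / h) by ring]

section OneSubPl2

variable {h : ℝ} (hh0 : 0 < h) (hh1 : h < 1) (β : ℝ)
include hh1

theorem integral_one_sub_pl2_left :
    ∫ x in (0 : ℝ)..(1 - h), (1 - pl2 h 1 β 0 x) = (1 - β) * (1 - h) / 2 := by
  have ht : 1 - h ≠ 0 := by linarith
  have hpiece : Set.EqOn (fun x => 1 - pl2 h 1 β 0 x) (fun x => (1 - β) / (1 - h) * x)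
      (Set.uIcc 0 (1 - h)) := by
    intro x hx
    rw [Set.uIcc_of_le (by linarith)] at hx
    simp only [pl2, if_pos hx.2]
    ring
  rw [intervalIntegral.integral_congr hpiece, intervalIntegral.integral_const_mul, integral_id]
  field_simp
  ring

include hh0

theorem integral_one_sub_pl2_right :
    ∫ x in (1 - h)..1, (1 - pl2 h 1 β 0 x) = h * (2 - β) / 2 := by
  have ht : 1 - h ≠ 0 := by linarith
  have hpiece : Set.EqOn (fun x => 1 - pl2 h 1 β 0 x) (fun x => (1 - β) + β / h * (x - (1 - h)))
      (Set.uIcc (1 - h) 1) := by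
    intro x hx
    rw [Set.uIcc_of_le (by linarith)] at hx
    simp only [pl2]
    split_ifs with hx'
    · obtain rfl : x = 1 - h := le_antisymm hx' hx.1
      field_simp
      ring
    · ring
  rw [intervalIntegral.integral_congr hpiece,
    intervalIntegral.integral_comp_sub_right (fun y => (1 - β) + β / h * y), sub_self,
    sub_sub_cancel, intervalIntegral.integral_add intervalIntegrable_const
      (intervalIntegral.intervalIntegrable_id.const_mul _),
    intervalIntegral.integral_const, intervalIntegral.integral_const_mul, integral_id]
  field_simp
  ring

theorem abs_add_abs_le_integral_abs_one_sub_pl2 :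
    |1 - β| * (1 - h) / 2 + h * |2 - β| / 2 ≤ ∫ x in (0 : ℝ)..1, |1 - pl2 h 1 β 0 x| := by
  have hcont : Continuous fun x => |1 - pl2 h 1 β 0 x| :=
    (continuous_const.sub (continuous_pl2 hh1.ne 1 β 0)).abs
  have hleft := intervalIntegral.abs_integral_le_integral_abs (μ := volume)
    (f := fun x => 1 - pl2 h 1 β 0 x) (a := 0) (b := 1 - h) (by linarith)
  have hright := intervalIntegral.abs_integral_le_integral_abs (μ := volume)
    (f := fun x => 1 - pl2 h 1 β 0 x) (a := 1 - h) (b := 1) (by linarith)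
  rw [integral_one_sub_pl2_left hh1, abs_div, abs_mul, abs_of_pos (by linarith : 0 < 1 - h),
    abs_two] at hleft
  rw [integral_one_sub_pl2_right hh0 hh1, abs_div, abs_mul, abs_of_pos hh0, abs_two] at hright
  rw [← intervalIntegral.integral_add_adjacent_intervals (hcont.intervalIntegrable 0 (1 - h))
    (hcont.intervalIntegrable _ _)]
  linarith

end OneSubPl2

theorem integral_abs_one_sub_pl2_one_one_zero {h : ℝ} (hh0 : 0 < h) (hh1 : h < 1) :
    ∫ x in (0 : ℝ)..1, |1 - pl2 h 1 1 0 x| = h / 2 := by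
  have hcont : Continuous fun x => 1 - pl2 h 1 1 0 x :=
    continuous_const.sub (continuous_pl2 hh1.ne 1 1 0)
  simp_rw [abs_of_nonneg (sub_nonneg.mpr (pl2_one_one_zero_le_one hh0.le _))]
  rw [← intervalIntegral.integral_add_adjacent_intervals (hcont.intervalIntegrable 0 (1 - h))
    (hcont.intervalIntegrable _ _), integral_one_sub_pl2_left hh1,
    integral_one_sub_pl2_right hh0 hh1]
  ring

theorem stmt0 (h : ℝ) (hh0 : 0 < h) (hh1 : h < 1) (hhalf : h ≤ 1 / 2) :
    ∀ β : ℝ,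
      (∫ x in (0:ℝ)..1, |1 - pl2 h 1 1 0 x|) ≤ ∫ x in (0:ℝ)..1, |1 - pl2 h 1 β 0 x| := by
  intro β
  refine (integral_abs_one_sub_pl2_one_one_zero hh0 hh1).trans_le
    (le_trans ?_ (abs_add_abs_le_integral_abs_one_sub_pl2 hh0 hh1 β))
  have htriangle : 1 ≤ |2 - β| + |1 - β| := by
    simpa [sub_sub_sub_cancel_right, show (2 : ℝ) - 1 = 1 by norm_num] using
      abs_sub (2 - β) (1 - β)
  have hmesh : |1 - β| * h ≤ |1 - β| * (1 - h) :=
    mul_le_mul_of_nonneg_left (by linarith) (abs_nonneg _)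
  have := mul_le_mul_of_nonneg_left htriangle hh0.le
  linarith
end

section
/- Let $h \in (0, 1/2]$ and let $\beta \in [-1,1]$. Define $u_h:[-1,1]\to\mathbb{R}$ to be the continuous piecewise linear function on the mesh $\{-1,-h,0,h,1\}$ with nodal values $u_h(-1)=-1$, $u_h(-h)=-1$, $u_h(0)=\beta$, $u_h(h)=1$, $u_h(1)=1$. Then $u_h$ minimizes $\int_{-1}^1 |\mathrm{sgn}(x) - v(x)|\,dx$ over all continuous piecewise linear $v$ on this mesh with $v(-1)=-1$ and $v(1)=1$. -/
/-!
Duality. Pair the error `e = sgn - v` of an admissible `v` with the piecewise constant weight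
`w = h/(1-h), -1, 1, -h/(1-h)` on the four elements. On each element `∫ w e` is `w` times the
trapezoid value of the affine error, and these weights make the coefficients of the interior nodal
values cancel, so `∫ w e = h` for every admissible `v`. Since `|w| ≤ 1` exactly when `h ≤ 1/2`,
`∫ |e| ≥ ∫ w e = h`; the error of `u_h` has the sign of `w`, with `∫ |e| = (1+β)h/2 + (1-β)h/2 = h`.
-/

open MeasureTheory

/-- Linear interpolation between `(x0, y0)` and `(x1, y1)`. -/
noncomputable def interp (x0 x1 y0 y1 x : ℝ) : ℝ :=
  y0 + (y1 - y0) * (x - x0) / (x1 - x0)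

/-- Continuous piecewise linear function on the mesh `{-1, -h, 0, h, 1}` with
nodal values `a, b, c, d, e`. -/
noncomputable def mesh4 (h a b c d e : ℝ) (x : ℝ) : ℝ :=
  if x ≤ -h then interp (-1) (-h) a b x
  else if x ≤ 0 then interp (-h) 0 b c x
  else if x ≤ h then interp 0 h c d x
  else interp h 1 d e x

open Set

theorem continuous_interp (x0 x1 y0 y1 : ℝ) : Continuous (interp x0 x1 y0 y1) := by
  unfold interp
  fun_prop

theorem const_sub_interp (s x0 x1 y0 y1 x : ℝ) :
    s - interp x0 x1 y0 y1 x = interp x0 x1 (s - y0) (s - y1) x := by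
  unfold interp
  ring

theorem neg_interp (x0 x1 y0 y1 x : ℝ) :
    -interp x0 x1 y0 y1 x = interp x0 x1 (-y0) (-y1) x := by
  unfold interp
  ring

theorem interp_nonneg {x0 x1 y0 y1 x : ℝ} (hx : x ∈ Icc x0 x1) (hy0 : 0 ≤ y0)
    (hy1 : 0 ≤ y1) : 0 ≤ interp x0 x1 y0 y1 x := by
  obtain ⟨hx0, hx1⟩ := hx
  have ht0 : 0 ≤ (x - x0) / (x1 - x0) := div_nonneg (by linarith) (by linarith)
  have ht1 : (x - x0) / (x1 - x0) ≤ 1 := div_le_one_of_le₀ (by linarith) (by linarith)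
  rw [interp, mul_div_assoc]
  nlinarith

theorem integral_interp (x0 x1 y0 y1 : ℝ) :
    ∫ x in x0..x1, interp x0 x1 y0 y1 x = (x1 - x0) * (y0 + y1) / 2 := by
  rcases eq_or_ne x0 x1 with rfl | hne
  · simp
  have hd : x1 - x0 ≠ 0 := sub_ne_zero.mpr hne.symm
  simp only [interp, mul_div_assoc]
  rw [intervalIntegral.integral_add intervalIntegrable_const
      ((by fun_prop : Continuous fun x ↦ (y1 - y0) * ((x - x0) / (x1 - x0))).intervalIntegrable
        _ _),
    intervalIntegral.integral_const, intervalIntegral.integral_const_mul,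
    intervalIntegral.integral_div, intervalIntegral.integral_comp_sub_right (fun x ↦ x)]
  simp only [smul_eq_mul, sub_self, integral_id]
  field_simp
  ring

theorem integral_abs_interp_of_nonneg {x0 x1 y0 y1 : ℝ} (hx : x0 ≤ x1) (hy0 : 0 ≤ y0)
    (hy1 : 0 ≤ y1) :
    ∫ x in x0..x1, |interp x0 x1 y0 y1 x| = (x1 - x0) * (y0 + y1) / 2 := by
  rw [← integral_interp]
  refine intervalIntegral.integral_congr fun x hx' ↦ abs_of_nonneg (interp_nonneg ?_ hy0 hy1)
  rwa [uIcc_of_le hx] at hx'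

theorem integral_abs_interp_of_nonpos {x0 x1 y0 y1 : ℝ} (hx : x0 ≤ x1) (hy0 : y0 ≤ 0)
    (hy1 : y1 ≤ 0) :
    ∫ x in x0..x1, |interp x0 x1 y0 y1 x| = -((x1 - x0) * (y0 + y1) / 2) := by
  simp_rw [← abs_neg (interp _ _ _ _ _), neg_interp]
  rw [integral_abs_interp_of_nonneg hx (neg_nonneg.mpr hy0) (neg_nonneg.mpr hy1)]
  ring

theorem mul_integral_le_integral_abs {f : ℝ → ℝ} {a b c : ℝ} (hab : a ≤ b) (hc : |c| ≤ 1) :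
    c * ∫ x in a..b, f x ≤ ∫ x in a..b, |f x| :=
  calc c * ∫ x in a..b, f x ≤ |c| * |∫ x in a..b, f x| := abs_mul c _ ▸ le_abs_self _
    _ ≤ |∫ x in a..b, f x| := mul_le_of_le_one_left (abs_nonneg _) hc
    _ ≤ ∫ x in a..b, |f x| := intervalIntegral.abs_integral_le_integral_abs hab

theorem mul_trapezoid_le_integral_abs_interp {x0 x1 y0 y1 c : ℝ} (hx : x0 ≤ x1) (hc : |c| ≤ 1) :
    c * ((x1 - x0) * (y0 + y1) / 2) ≤ ∫ x in x0..x1, |interp x0 x1 y0 y1 x| := by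
  rw [← integral_interp]
  exact mul_integral_le_integral_abs hx hc

theorem intervalIntegrable_and_integral_eq_of_eqOn_Ioo {f g : ℝ → ℝ} {a b : ℝ} (hab : a ≤ b)
    (hg : IntervalIntegrable g volume a b) (hfg : EqOn f g (Ioo a b)) :
    IntervalIntegrable f volume a b ∧ ∫ x in a..b, f x = ∫ x in a..b, g x := by
  rw [← uIoo_of_le hab] at hfg
  exact ⟨hg.congr_uIoo hfg.symm, intervalIntegral.integral_congr_uIoo hfg⟩

theorem integral_abs_sign_sub_mesh4 {h : ℝ} (h0 : 0 < h) (h1 : h < 1) (b c d : ℝ) :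
    ∫ x in (-1)..1, |Real.sign x - mesh4 h (-1) b c d 1 x| =
      (∫ x in (-1)..(-h), |interp (-1) (-h) 0 (-1 - b) x|) +
      (∫ x in (-h)..0, |interp (-h) 0 (-1 - b) (-1 - c) x|) +
      (∫ x in 0..h, |interp 0 h (1 - c) (1 - d) x|) +
      ∫ x in h..1, |interp h 1 (1 - d) 0 x| := by
  set f := fun x ↦ |Real.sign x - mesh4 h (-1) b c d 1 x|
  have piece {p q y0 y1 : ℝ} (hpq : p ≤ q)
      (hf : EqOn f (fun x ↦ |interp p q y0 y1 x|) (Ioo p q)) :=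
    intervalIntegrable_and_integral_eq_of_eqOn_Ioo hpq
      ((continuous_interp p q y0 y1).abs.intervalIntegrable p q) hf
  obtain ⟨i1, e1⟩ := piece (p := -1) (q := -h) (y0 := 0) (y1 := -1 - b) (by linarith) <| by
    rintro x ⟨-, hx⟩
    simp only [f, mesh4, if_pos hx.le, Real.sign_of_neg (by linarith : x < 0), const_sub_interp,
      sub_self]
  obtain ⟨i2, e2⟩ := piece (p := -h) (q := 0) (y0 := -1 - b) (y1 := -1 - c) (by linarith) <| by
    rintro x ⟨hx1, hx2⟩
    simp only [f, mesh4, if_neg (not_le.mpr hx1), if_pos hx2.le, Real.sign_of_neg hx2,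
      const_sub_interp]
  obtain ⟨i3, e3⟩ := piece (p := 0) (q := h) (y0 := 1 - c) (y1 := 1 - d) h0.le <| by
    rintro x ⟨hx1, hx2⟩
    simp only [f, mesh4, if_neg (by linarith : ¬x ≤ -h), if_neg (not_le.mpr hx1), if_pos hx2.le,
      Real.sign_of_pos hx1, const_sub_interp]
  obtain ⟨i4, e4⟩ := piece (p := h) (q := 1) (y0 := 1 - d) (y1 := 0) h1.le <| by
    rintro x ⟨hx1, -⟩
    simp only [f, mesh4, if_neg (by linarith : ¬x ≤ -h), if_neg (by linarith : ¬x ≤ 0),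
      if_neg (not_le.mpr hx1), Real.sign_of_pos (h0.trans hx1), const_sub_interp, sub_self]
  rw [← e1, ← e2, ← e3, ← e4, intervalIntegral.integral_add_adjacent_intervals i1 i2,
    intervalIntegral.integral_add_adjacent_intervals (i1.trans i2) i3,
    intervalIntegral.integral_add_adjacent_intervals ((i1.trans i2).trans i3) i4]

theorem le_integral_abs_sign_sub_mesh4 {h : ℝ} (h0 : 0 < h) (hh : h ≤ 1 / 2) (b c d : ℝ) :
    h ≤ ∫ x in (-1)..1, |Real.sign x - mesh4 h (-1) b c d 1 x| := by
  have h1 : h < 1 := by linarith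
  have hw : |h / (1 - h)| ≤ 1 := by
    rw [abs_of_nonneg (div_nonneg h0.le (by linarith)), div_le_one (by linarith)]
    linarith
  have w1 := mul_trapezoid_le_integral_abs_interp (x0 := -1) (x1 := -h) (y0 := 0) (y1 := -1 - b)
    (by linarith) hw
  have w2 := mul_trapezoid_le_integral_abs_interp (x0 := -h) (x1 := 0) (y0 := -1 - b)
    (y1 := -1 - c) (c := -1) (by linarith) (by norm_num)
  have w3 := mul_trapezoid_le_integral_abs_interp (x0 := 0) (x1 := h) (y0 := 1 - c) (y1 := 1 - d)
    (c := 1) h0.le (by norm_num)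
  have w4 := mul_trapezoid_le_integral_abs_interp (x0 := h) (x1 := 1) (y0 := 1 - d) (y1 := 0)
    h1.le (by rwa [abs_neg])
  have hsum : h / (1 - h) * ((-h - -1) * (0 + (-1 - b)) / 2)
      + -1 * ((0 - -h) * (-1 - b + (-1 - c)) / 2) + 1 * ((h - 0) * (1 - c + (1 - d)) / 2)
      + -(h / (1 - h)) * ((1 - h) * (1 - d + 0) / 2) = h := by
    field_simp [show 1 - h ≠ 0 by linarith]
    ring
  rw [integral_abs_sign_sub_mesh4 h0 h1]
  linarith

theorem integral_abs_sign_sub_mesh4_no_overshoot {h β : ℝ} (h0 : 0 < h) (h1 : h < 1)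
    (hβ : β ∈ Icc (-1 : ℝ) 1) :
    ∫ x in (-1)..1, |Real.sign x - mesh4 h (-1) (-1) β 1 1 x| = h := by
  rw [integral_abs_sign_sub_mesh4 h0 h1,
    integral_abs_interp_of_nonneg (by linarith) le_rfl (by norm_num),
    integral_abs_interp_of_nonpos (by linarith) (by norm_num) (by linarith [hβ.1]),
    integral_abs_interp_of_nonneg h0.le (by linarith [hβ.2]) (by norm_num),
    integral_abs_interp_of_nonneg h1.le (by norm_num) le_rfl]
  ring

theorem stmt9 (h : ℝ) (hh0 : 0 < h) (hh : h ≤ 1 / 2)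
    (β : ℝ) (hβ : β ∈ Set.Icc (-1 : ℝ) 1) :
    ∀ b c d : ℝ,
      (∫ x in (-1:ℝ)..1, |Real.sign x - mesh4 h (-1) (-1) β 1 1 x|) ≤
        ∫ x in (-1:ℝ)..1, |Real.sign x - mesh4 h (-1) b c d 1 x| := by
  intro b c d
  rw [integral_abs_sign_sub_mesh4_no_overshoot hh0 (by linarith) hβ]
  exact le_integral_abs_sign_sub_mesh4 hh0 hh b c d
end

section
/- Let $h \in (1/2, 1)$ and $\beta \in [-1,1]$. Define $u_h:[-1,1]\to\mathbb{R}$ as the continuous piecewise linear function on the mesh $\{-1,-h,0,h,1\}$ with $u_h(-1)=-1$, $u_h(-h) = -\sqrt{2h}-\beta(\sqrt{2h}-1)$, $u_h(0)=\beta$, $u_h(h)=\sqrt{2h}-\beta(\sqrt{2h}-1)$, $u_h(1)=1$. Then $u_h$ minimizes $\int_{-1}^1|\mathrm{sgn}(x)-v(x)|\,dx$ over all continuous piecewise linear $v$ on this mesh with $v(-1)=-1$, $v(1)=1$. -/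
/-!
Put `s = √(2h)`, so `s / 2 < h` exactly when `h > 1/2`, and let `σ` be `+1` on
`(-1, -s/2) ∪ (0, s/2)` and `-1` on `(-s/2, 0) ∪ (s/2, 1)`. Since `s² = 2h`, `σ` is orthogonal to
the three interior hat functions of the mesh, so `∫ σ (sgn - v) = 2s - 1 - h` for every admissible
`v`, and this is a lower bound for `∫ |sgn - v|`. The error of `u_h` changes sign exactly at
`±s/2`, with the sign of `σ`, so `u_h` attains the bound.
-/

open MeasureTheory

open Set

section Affine

variable {f : ℝ → ℝ} {a b p q : ℝ}

theorem integral_affine (a b p q : ℝ) :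
    ∫ x in a..b, (p + q * x) = p * (b - a) + q * (b ^ 2 - a ^ 2) / 2 := by
  rw [intervalIntegral.integral_add intervalIntegrable_const
      ((continuous_const_mul q).intervalIntegrable a b),
    intervalIntegral.integral_const, intervalIntegral.integral_const_mul, integral_id, smul_eq_mul]
  ring

theorem integral_eq_of_eqOn_Ioo_affine (hab : a ≤ b)
    (hf : EqOn f (fun x => p + q * x) (Ioo a b)) :
    ∫ x in a..b, f x = p * (b - a) + q * (b ^ 2 - a ^ 2) / 2 := by
  rw [intervalIntegral.integral_congr_Ioo_of_le hab hf, integral_affine]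

theorem intervalIntegrable_of_eqOn_Ioo_affine (hab : a ≤ b)
    (hf : EqOn f (fun x => p + q * x) (Ioo a b)) : IntervalIntegrable f volume a b :=
  (by fun_prop : Continuous fun x => p + q * x).intervalIntegrable a b |>.congr_uIoo
    (uIoo_of_le hab ▸ hf.symm)

theorem integral_abs_of_nonneg_on_Ioo (hab : a ≤ b) (hf : ∀ x ∈ Ioo a b, 0 ≤ f x) :
    ∫ x in a..b, |f x| = ∫ x in a..b, f x :=
  intervalIntegral.integral_congr_Ioo_of_le hab fun x hx => abs_of_nonneg (hf x hx)

theorem integral_abs_of_nonpos_on_Ioo (hab : a ≤ b) (hf : ∀ x ∈ Ioo a b, f x ≤ 0) :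
    ∫ x in a..b, |f x| = -∫ x in a..b, f x := by
  rw [← intervalIntegral.integral_neg]
  exact intervalIntegral.integral_congr_Ioo_of_le hab fun x hx => abs_of_nonpos (hf x hx)

end Affine

noncomputable def meshErr (h b c d x : ℝ) : ℝ :=
  Real.sign x - mesh4 h (-1) b c d 1 x

section MeshError

variable {h b c d : ℝ}

theorem meshErr_eqOn_outer_left (h0 : 0 < h) :
    EqOn (meshErr h b c d) (fun x => -(b + 1) / (1 - h) + -(b + 1) / (1 - h) * x)
      (Ioo (-1) (-h)) := by
  intro x ⟨_, hx⟩
  simp only [meshErr, mesh4, interp, if_pos hx.le,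
    Real.sign_of_neg (hx.trans (neg_neg_of_pos h0))]
  ring

theorem meshErr_eqOn_inner_left (h0 : 0 < h) :
    EqOn (meshErr h b c d) (fun x => (-1 - c) + (b - c) / h * x) (Ioo (-h) 0) := by
  intro x ⟨hx1, hx2⟩
  simp only [meshErr, mesh4, interp, if_neg hx1.not_ge, if_pos hx2.le, Real.sign_of_neg hx2]
  field_simp [h0.ne']
  ring

theorem meshErr_eqOn_inner_right (h0 : 0 < h) :
    EqOn (meshErr h b c d) (fun x => (1 - c) + (c - d) / h * x) (Ioo 0 h) := by
  intro x ⟨hx1, hx2⟩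
  simp only [meshErr, mesh4, interp, if_neg (by linarith : ¬ x ≤ -h), if_neg hx1.not_ge,
    if_pos hx2.le, Real.sign_of_pos hx1]
  field_simp [h0.ne']
  ring

theorem meshErr_eqOn_outer_right (h0 : 0 < h) (h1 : h < 1) :
    EqOn (meshErr h b c d) (fun x => (1 - d) / (1 - h) + -(1 - d) / (1 - h) * x)
      (Ioo h 1) := by
  intro x ⟨hx, _⟩
  simp only [meshErr, mesh4, interp, if_neg (by linarith : ¬ x ≤ -h),
    if_neg (by linarith : ¬ x ≤ 0), if_neg hx.not_ge, Real.sign_of_pos (h0.trans hx)]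
  field_simp [(sub_pos.2 h1).ne']
  ring

theorem intervalIntegrable_meshErr (h0 : 0 < h) (h1 : h < 1) :
    IntervalIntegrable (meshErr h b c d) volume (-1) 1 :=
  (((intervalIntegrable_of_eqOn_Ioo_affine (by linarith) (meshErr_eqOn_outer_left h0)).trans
    (intervalIntegrable_of_eqOn_Ioo_affine (by linarith) (meshErr_eqOn_inner_left h0))).trans
    (intervalIntegrable_of_eqOn_Ioo_affine h0.le (meshErr_eqOn_inner_right h0))).trans
    (intervalIntegrable_of_eqOn_Ioo_affine h1.le (meshErr_eqOn_outer_right h0 h1))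

section Splitting

variable {s : ℝ} (hs : s ^ 2 = 2 * h) (hs1 : 1 < s) (h1 : h < 1)
include hs hs1 h1

theorem integral_abs_meshErr_eq_sum :
    ∫ x in (-1)..1, |meshErr h b c d x| =
      (∫ x in (-1)..(-h), |meshErr h b c d x|) +
      (∫ x in (-h)..(-(s / 2)), |meshErr h b c d x|) +
      (∫ x in (-(s / 2))..0, |meshErr h b c d x|) + (∫ x in 0..(s / 2), |meshErr h b c d x|) +
      (∫ x in (s / 2)..h, |meshErr h b c d x|) + (∫ x in h..1, |meshErr h b c d x|) := by
  have hI : ∀ u ∈ Icc (-1 : ℝ) 1, ∀ v ∈ Icc (-1 : ℝ) 1,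
      IntervalIntegrable (fun x => |meshErr h b c d x|) volume u v := fun u hu v hv =>
    (intervalIntegrable_meshErr (by nlinarith) h1).abs.mono_set
      (uIcc_subset_uIcc (Icc_subset_uIcc hu) (Icc_subset_uIcc hv))
  have : s / 2 < h := by nlinarith
  rw [← intervalIntegral.integral_add_adjacent_intervals (b := -h) (hI _ ?_ _ ?_) (hI _ ?_ _ ?_),
    ← intervalIntegral.integral_add_adjacent_intervals (a := -h) (b := -(s / 2)) (c := 1)
      (hI _ ?_ _ ?_) (hI _ ?_ _ ?_),
    ← intervalIntegral.integral_add_adjacent_intervals (a := -(s / 2)) (b := 0) (c := 1)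
      (hI _ ?_ _ ?_) (hI _ ?_ _ ?_),
    ← intervalIntegral.integral_add_adjacent_intervals (a := 0) (b := s / 2) (c := 1)
      (hI _ ?_ _ ?_) (hI _ ?_ _ ?_),
    ← intervalIntegral.integral_add_adjacent_intervals (a := s / 2) (b := h) (c := 1)
      (hI _ ?_ _ ?_) (hI _ ?_ _ ?_)]
  · ring
  all_goals constructor <;> linarith

theorem signed_integral_meshErr_eq (b c d : ℝ) :
    (∫ x in (-1)..(-h), meshErr h b c d x) + (∫ x in (-h)..(-(s / 2)), meshErr h b c d x) -
      (∫ x in (-(s / 2))..0, meshErr h b c d x) + (∫ x in 0..(s / 2), meshErr h b c d x) -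
      (∫ x in (s / 2)..h, meshErr h b c d x) - (∫ x in h..1, meshErr h b c d x) =
      2 * s - 1 - h := by
  have h0 : 0 < h := by nlinarith
  have : s / 2 < h := by nlinarith
  rw [integral_eq_of_eqOn_Ioo_affine (by linarith) (meshErr_eqOn_outer_left h0),
    integral_eq_of_eqOn_Ioo_affine (by linarith)
      ((meshErr_eqOn_inner_left h0).mono (Ioo_subset_Ioo_right (by linarith))),
    integral_eq_of_eqOn_Ioo_affine (by linarith)
      ((meshErr_eqOn_inner_left h0).mono (Ioo_subset_Ioo_left (by linarith))),
    integral_eq_of_eqOn_Ioo_affine (by linarith)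
      ((meshErr_eqOn_inner_right h0).mono (Ioo_subset_Ioo_right (by linarith))),
    integral_eq_of_eqOn_Ioo_affine (by linarith)
      ((meshErr_eqOn_inner_right h0).mono (Ioo_subset_Ioo_left (by linarith))),
    integral_eq_of_eqOn_Ioo_affine h1.le (meshErr_eqOn_outer_right h0 h1)]
  obtain rfl : h = s ^ 2 / 2 := by linarith
  have : 2 - s ^ 2 ≠ 0 := by linarith
  field_simp
  ring

theorem le_integral_abs_meshErr (b c d : ℝ) :
    2 * s - 1 - h ≤ ∫ x in (-1)..1, |meshErr h b c d x| := by
  have : s / 2 < h := by nlinarith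
  have hpos : ∀ {u v : ℝ}, u ≤ v →
      ∫ x in u..v, meshErr h b c d x ≤ ∫ x in u..v, |meshErr h b c d x| := fun huv =>
    (le_abs_self _).trans (intervalIntegral.abs_integral_le_integral_abs huv)
  have hneg : ∀ {u v : ℝ}, u ≤ v →
      -∫ x in u..v, meshErr h b c d x ≤ ∫ x in u..v, |meshErr h b c d x| := fun huv =>
    (neg_le_abs _).trans (intervalIntegral.abs_integral_le_integral_abs huv)
  rw [integral_abs_meshErr_eq_sum hs hs1 h1, ← signed_integral_meshErr_eq hs hs1 h1 b c d]
  linarith [hpos (u := -1) (v := -h) (by linarith), hpos (u := -h) (v := -(s / 2)) (by linarith),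
    hneg (u := -(s / 2)) (v := 0) (by linarith), hpos (u := 0) (v := s / 2) (by linarith),
    hneg (u := s / 2) (v := h) (by linarith), hneg (u := h) (v := 1) h1.le]

end Splitting

variable {s β : ℝ}

theorem candidate_meshErr_eqOn_outer_left (h0 : 0 < h) :
    EqOn (meshErr h (-s - β * (s - 1)) β (s - β * (s - 1)))
      (fun x => (s - 1) * (1 + β) * (1 + x) / (1 - h)) (Ioo (-1) (-h)) := fun x hx => by
  rw [meshErr_eqOn_outer_left h0 hx]
  ring

theorem candidate_meshErr_eqOn_inner_left (hs : s ^ 2 = 2 * h) (hs1 : 1 < s) :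
    EqOn (meshErr h (-s - β * (s - 1)) β (s - β * (s - 1)))
      (fun x => (1 + β) * (-2 * x - s) / s) (Ioo (-h) 0) := fun x hx => by
  rw [meshErr_eqOn_inner_left (by nlinarith) hx]
  obtain rfl : h = s ^ 2 / 2 := by linarith
  field_simp
  ring

theorem candidate_meshErr_eqOn_inner_right (hs : s ^ 2 = 2 * h) (hs1 : 1 < s) :
    EqOn (meshErr h (-s - β * (s - 1)) β (s - β * (s - 1)))
      (fun x => (1 - β) * (s - 2 * x) / s) (Ioo 0 h) := fun x hx => by
  rw [meshErr_eqOn_inner_right (by nlinarith) hx]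
  obtain rfl : h = s ^ 2 / 2 := by linarith
  field_simp
  ring

theorem candidate_meshErr_eqOn_outer_right (h0 : 0 < h) (h1 : h < 1) :
    EqOn (meshErr h (-s - β * (s - 1)) β (s - β * (s - 1)))
      (fun x => (s - 1) * (1 - β) * (x - 1) / (1 - h)) (Ioo h 1) := fun x hx => by
  rw [meshErr_eqOn_outer_right h0 h1 hx]
  ring

theorem integral_abs_candidate_meshErr (hs : s ^ 2 = 2 * h) (hs1 : 1 < s) (h1 : h < 1)
    (hβ : β ∈ Icc (-1) 1) :
    ∫ x in (-1)..1, |meshErr h (-s - β * (s - 1)) β (s - β * (s - 1)) x| = 2 * s - 1 - h := by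
  obtain ⟨hβ0, hβ1⟩ := hβ
  have h0 : 0 < h := by nlinarith
  have : s / 2 < h := by nlinarith
  have : 0 < 1 - h := by linarith
  rw [integral_abs_meshErr_eq_sum hs hs1 h1, ← signed_integral_meshErr_eq hs hs1 h1,
    integral_abs_of_nonneg_on_Ioo (by linarith) fun x hx => by
      rw [candidate_meshErr_eqOn_outer_left h0 hx]
      exact div_nonneg (mul_nonneg (mul_nonneg (by linarith) (by linarith)) (by linarith [hx.1]))
        (by linarith),
    integral_abs_of_nonneg_on_Ioo (by linarith) fun x hx => by
      rw [candidate_meshErr_eqOn_inner_left hs hs1 ⟨hx.1, by linarith [hx.2]⟩]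
      exact div_nonneg (mul_nonneg (by linarith) (by linarith [hx.2])) (by linarith),
    integral_abs_of_nonpos_on_Ioo (by linarith) fun x hx => by
      rw [candidate_meshErr_eqOn_inner_left hs hs1 ⟨by linarith [hx.1], hx.2⟩]
      exact div_nonpos_of_nonpos_of_nonneg
        (mul_nonpos_of_nonneg_of_nonpos (by linarith) (by linarith [hx.1])) (by linarith),
    integral_abs_of_nonneg_on_Ioo (by linarith) fun x hx => by
      rw [candidate_meshErr_eqOn_inner_right hs hs1 ⟨hx.1, by linarith [hx.2]⟩]
      exact div_nonneg (mul_nonneg (by linarith) (by linarith [hx.2])) (by linarith),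
    integral_abs_of_nonpos_on_Ioo (by linarith) fun x hx => by
      rw [candidate_meshErr_eqOn_inner_right hs hs1 ⟨by linarith [hx.1], hx.2⟩]
      exact div_nonpos_of_nonpos_of_nonneg
        (mul_nonpos_of_nonneg_of_nonpos (by linarith) (by linarith [hx.1])) (by linarith),
    integral_abs_of_nonpos_on_Ioo h1.le fun x hx => by
      rw [candidate_meshErr_eqOn_outer_right h0 h1 hx]
      exact div_nonpos_of_nonpos_of_nonneg
        (mul_nonpos_of_nonneg_of_nonpos (mul_nonneg (by linarith) (by linarith))
          (by linarith [hx.2])) (by linarith)]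
  ring

end MeshError

theorem stmt11 (h : ℝ) (hh0 : 1 / 2 < h) (hh1 : h < 1)
    (β : ℝ) (hβ : β ∈ Set.Icc (-1 : ℝ) 1) :
    ∀ b c d : ℝ,
      (∫ x in (-1:ℝ)..1,
        |Real.sign x -
          mesh4 h (-1) (-Real.sqrt (2 * h) - β * (Real.sqrt (2 * h) - 1)) β
            (Real.sqrt (2 * h) - β * (Real.sqrt (2 * h) - 1)) 1 x|) ≤
        ∫ x in (-1:ℝ)..1, |Real.sign x - mesh4 h (-1) b c d 1 x| := by
  intro b c d
  have hs : √(2 * h) ^ 2 = 2 * h := Real.sq_sqrt (by linarith)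
  have hs1 : 1 < √(2 * h) := Real.lt_sqrt zero_le_one |>.2 (by linarith)
  calc _ = 2 * √(2 * h) - 1 - h := integral_abs_candidate_meshErr hs hs1 hh1 hβ
    _ ≤ _ := le_integral_abs_meshErr hs hs1 hh1 b c d
end

section
/- Let $N \ge 2$ and $h_1,\dots,h_N > 0$ with $\sum_i h_i = 1$, giving nodes $x_0 = 0$, $x_i = x_{i-1}+h_i$. Define $\vartheta_N = 0$ and for $i = N-1,\dots,1$, $\vartheta_i^2 = \tfrac{1}{2}\big(1 - (2(1-\vartheta_{i+1})^2 - 1)\tfrac{h_{i+1}}{h_i}\big)$ (with $\vartheta_i \ge 0$ when defined). Suppose $\vartheta_i$ is real and $\vartheta_i < 1 - 1/\sqrt{2}$ for all $i \ge k$ for some $k \ge 1$. Then $\tfrac{h_i}{2}(2(1-\vartheta_i)^2 - 1) \le \tfrac{h_{i+1}}{2}(2(1-\vartheta_{i+1})^2 - 1)$ for all $i$ with $k \le i \le N-1$, and consequently $\tfrac{h_k}{2}(2(1-\vartheta_k)^2 - 1) \le \tfrac{h_N}{2}$. -/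
/-!
Rescaled by `h i / 2`, the recursion for `ϑ i` says that the `(i+1)`-st quantity equals
`h i / 2 * (1 - 2 ϑ_i ^ 2)`, and `2 (1 - ϑ) ^ 2 - 1 ≤ 1 - 2 ϑ ^ 2` is `ϑ (ϑ - 1) ≤ 0`, true for
`ϑ ∈ [0, 1]`. So the quantities increase from `k` to `N`, where `ϑ_N = 0` makes the last one `h N / 2`.
-/

lemma two_mul_one_sub_sq_sub_one_le {t : ℝ} (h₀ : 0 ≤ t) (h₁ : t ≤ 1) :
    2 * (1 - t) ^ 2 - 1 ≤ 1 - 2 * t ^ 2 := by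
  nlinarith [mul_nonneg h₀ (sub_nonneg.2 h₁)]

lemma half_mul_le_of_sq_eq {a b s t : ℝ} (ha : 0 < a) (hs₀ : 0 ≤ s) (hs₁ : s ≤ 1)
    (hrec : s ^ 2 = 1 / 2 * (1 - t * (b / a))) :
    a / 2 * (2 * (1 - s) ^ 2 - 1) ≤ b / 2 * t :=
  calc a / 2 * (2 * (1 - s) ^ 2 - 1)
      ≤ a / 2 * (1 - 2 * s ^ 2) :=
        mul_le_mul_of_nonneg_left (two_mul_one_sub_sq_sub_one_le hs₀ hs₁) (by positivity)
    _ = b / 2 * t := by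
        rw [hrec]
        field_simp
        ring

theorem stmt13_general (N k : ℕ) (hk : 1 ≤ k) (hkN : k ≤ N - 1)
    (h θ : ℕ → ℝ) (hpos : ∀ i, 1 ≤ i → i ≤ N → 0 < h i)
    (hθN : θ N = 0)
    (hθnn : ∀ i, k ≤ i → i ≤ N - 1 → 0 ≤ θ i)
    (hθrec : ∀ i, k ≤ i → i ≤ N - 1 →
      θ i ^ 2 = (1 / 2) * (1 - (2 * (1 - θ (i + 1)) ^ 2 - 1) * (h (i + 1) / h i)))
    (hθlt : ∀ i, k ≤ i → i ≤ N - 1 → θ i < 1 - 1 / Real.sqrt 2) :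
    (∀ i, k ≤ i → i ≤ N - 1 →
      h i / 2 * (2 * (1 - θ i) ^ 2 - 1) ≤ h (i + 1) / 2 * (2 * (1 - θ (i + 1)) ^ 2 - 1)) ∧
    h k / 2 * (2 * (1 - θ k) ^ 2 - 1) ≤ h N / 2 := by
  have hstep : ∀ i, k ≤ i → i ≤ N - 1 →
      h i / 2 * (2 * (1 - θ i) ^ 2 - 1) ≤ h (i + 1) / 2 * (2 * (1 - θ (i + 1)) ^ 2 - 1) := by
    intro i hki hiN
    have hθi_le_one : θ i ≤ 1 := by
      have : 0 < 1 / Real.sqrt 2 := by positivity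
      linarith [hθlt i hki hiN]
    exact half_mul_le_of_sq_eq (hpos i (hk.trans hki) (by omega)) (hθnn i hki hiN) hθi_le_one
      (hθrec i hki hiN)
  refine ⟨hstep, ?_⟩
  have hmono : MonotoneOn (fun i ↦ h i / 2 * (2 * (1 - θ i) ^ 2 - 1)) (Set.Icc k N) :=
    monotoneOn_of_le_add_one Set.ordConnected_Icc fun i _ hi hi' ↦
      hstep i hi.1 (by have := hi'.2; omega)
  have hlast := hmono ⟨le_rfl, by omega⟩ ⟨by omega, le_rfl⟩ (by omega)
  norm_num [hθN] at hlast
  exact hlast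

theorem stmt13 (N k : ℕ) (hN : 2 ≤ N) (hk : 1 ≤ k) (hkN : k ≤ N - 1)
    (h θ : ℕ → ℝ) (hpos : ∀ i, 1 ≤ i → i ≤ N → 0 < h i)
    (hsum : ∑ i ∈ Finset.Icc 1 N, h i = 1)
    (hθN : θ N = 0)
    (hθnn : ∀ i, k ≤ i → i ≤ N - 1 → 0 ≤ θ i)
    (hθrec : ∀ i, k ≤ i → i ≤ N - 1 →
      θ i ^ 2 = (1 / 2) * (1 - (2 * (1 - θ (i + 1)) ^ 2 - 1) * (h (i + 1) / h i)))
    (hθlt : ∀ i, k ≤ i → i ≤ N - 1 → θ i < 1 - 1 / Real.sqrt 2) :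
    (∀ i, k ≤ i → i ≤ N - 1 →
      h i / 2 * (2 * (1 - θ i) ^ 2 - 1) ≤ h (i + 1) / 2 * (2 * (1 - θ (i + 1)) ^ 2 - 1)) ∧
    h k / 2 * (2 * (1 - θ k) ^ 2 - 1) ≤ h N / 2 :=
  stmt13_general N k hk hkN h θ hpos hθN hθnn hθrec hθlt
end

section
/- Let $\hat\tau = \{(x,y) : x \ge 0, y \ge 0, x+y \le 1\}$ and $\hat\varphi_0(x,y) = 1 - x - y$. For $\alpha > 1$, $\int_{\hat\tau} \mathrm{sgn}\big({-(\alpha-1)} + (\alpha-1)x + \alpha y\big)\,\hat\varphi_0(x,y)\,dx\,dy = \frac{1}{6} - \frac{1}{3}\cdot\frac{(\alpha-1)(\alpha+1)}{\alpha^2}$. -/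
/-!
Since `α > 0`, the integrand's sign is that of `y - c (1 - x)` with `c = (α - 1) / α ∈ [0, 1]`.
Slicing the triangle vertically, on the slice `0 ≤ y ≤ b := 1 - x` the sign is `-1` below
`t := c b` and `+1` above it, so the slice integral is
`-∫₀ᵗ (b - y) + ∫ₜᵇ (b - y) = b² / 2 - 2 b t + t² = b² (1/2 - 2c + c²)`.
Integrating `(1 - x)²` over `[0, 1]` contributes the factor `1/3`.
-/

open MeasureTheory

namespace Real

theorem sign_mul_of_pos {a : ℝ} (ha : 0 < a) (r : ℝ) : sign (a * r) = sign r := by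
  rcases lt_trichotomy r 0 with hr | rfl | hr
  · rw [sign_of_neg (mul_neg_of_pos_of_neg ha hr), sign_of_neg hr]
  · rw [mul_zero]
  · rw [sign_of_pos (mul_pos ha hr), sign_of_pos hr]

theorem abs_sign_le_one (r : ℝ) : |sign r| ≤ 1 := by
  rcases sign_apply_eq r with h | h | h <;> simp [h]

theorem monotone_sign : Monotone sign := by
  intro a b hab
  unfold sign
  split_ifs <;> linarith

theorem measurable_sign : Measurable sign := monotone_sign.measurable

end Real

def refTriangle : Set (ℝ × ℝ) := {p | 0 ≤ p.1 ∧ 0 ≤ p.2 ∧ p.1 + p.2 ≤ 1}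

theorem isCompact_refTriangle : IsCompact refTriangle := by
  refine (isCompact_Icc (a := ((0 : ℝ), (0 : ℝ))) (b := (1, 1))).of_isClosed_subset ?_ ?_
  · exact (isClosed_le continuous_const continuous_fst).inter
      ((isClosed_le continuous_const continuous_snd).inter
        (isClosed_le (continuous_fst.add continuous_snd) continuous_const))
  · rintro ⟨x, y⟩ ⟨hx, hy, hxy⟩
    exact ⟨⟨hx, hy⟩, by dsimp only at *; linarith, by dsimp only at *; linarith⟩

theorem IsCompact.integrableOn_sign_mul {X : Type*} [TopologicalSpace X] [T2Space X]
    [MeasurableSpace X] [OpensMeasurableSpace X] {μ : Measure X} [IsFiniteMeasureOnCompacts μ]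
    {K : Set X} {g h : X → ℝ} (hK : IsCompact K) (hg : Measurable g) (hh : ContinuousOn h K) :
    IntegrableOn (fun p => Real.sign (g p) * h p) K μ := by
  refine IntegrableOn.mul_continuousOn ?_ hh hK
  exact .of_bound hK.measure_lt_top (Real.measurable_sign.comp hg).aestronglyMeasurable 1
    (.of_forall fun p => Real.abs_sign_le_one _)

theorem integral_sign_sub_mul_sub {t b : ℝ} (ht : 0 ≤ t) (htb : t ≤ b) :
    ∫ y in (0)..b, Real.sign (y - t) * (b - y) = b ^ 2 / 2 - 2 * b * t + t ^ 2 := by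
  have hint : ∀ u v : ℝ, IntervalIntegrable (fun y => Real.sign (y - t) * (b - y)) volume u v :=
    fun u v => (Real.monotone_sign.comp fun _ _ h => sub_le_sub_right h t).intervalIntegrable
      |>.mul_continuousOn (by fun_prop)
  have below : ∫ y in (0)..t, Real.sign (y - t) * (b - y) = ∫ y in (0)..t, (y - b) := by
    refine intervalIntegral.integral_congr_Ioo_of_le ht fun y hy => ?_
    rw [Real.sign_of_neg (sub_neg.2 hy.2)]
    ring
  have above : ∫ y in t..b, Real.sign (y - t) * (b - y) = ∫ y in t..b, (b - y) := by
    refine intervalIntegral.integral_congr_Ioo_of_le htb fun y hy => ?_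
    rw [Real.sign_of_pos (sub_pos.2 hy.1), one_mul]
  rw [← intervalIntegral.integral_add_adjacent_intervals (hint 0 t) (hint t b), below, above]
  simp [intervalIntegral.integral_comp_sub_left (fun y => y) b]
  ring

theorem indicator_refTriangle_apply (f : ℝ × ℝ → ℝ) (x y : ℝ) :
    refTriangle.indicator f (x, y) =
      (Set.Icc 0 1).indicator (fun x => (Set.Icc 0 (1 - x)).indicator (fun y => f (x, y)) y) x := by
  simp only [Set.indicator_apply, refTriangle, Set.mem_ofPred_eq, Set.mem_Icc]
  split_ifs <;> first | rfl | grind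

theorem integral_refTriangle_eq {f : ℝ × ℝ → ℝ} (hf : IntegrableOn f refTriangle) :
    ∫ p in refTriangle, f p = ∫ x in (0)..1, ∫ y in (0)..(1 - x), f (x, y) := by
  have hS : MeasurableSet refTriangle := isCompact_refTriangle.isClosed.measurableSet
  have slice (x : ℝ) : ∫ y, refTriangle.indicator f (x, y) =
      (Set.Icc 0 1).indicator (fun x => ∫ y in (0)..(1 - x), f (x, y)) x := by
    simp only [indicator_refTriangle_apply]
    by_cases hx : x ∈ Set.Icc (0 : ℝ) 1
    · simp only [Set.indicator_of_mem hx]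
      rw [integral_indicator measurableSet_Icc,
        integral_Icc_eq_integral_Ioc, intervalIntegral.integral_of_le (by linarith [hx.2])]
    · simp only [Set.indicator_of_notMem hx, integral_zero]
  rw [← integral_indicator hS, Measure.volume_eq_prod,
    integral_prod _ ((integrable_indicator_iff hS).2 hf)]
  simp only [slice]
  rw [integral_indicator measurableSet_Icc, integral_Icc_eq_integral_Ioc,
    intervalIntegral.integral_of_le zero_le_one]

theorem stmt16 (α : ℝ) (hα : 1 < α) :
    (∫ p in {p : ℝ × ℝ | 0 ≤ p.1 ∧ 0 ≤ p.2 ∧ p.1 + p.2 ≤ 1},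
        Real.sign (-(α - 1) + (α - 1) * p.1 + α * p.2) * (1 - p.1 - p.2)) =
      1 / 6 - 1 / 3 * ((α - 1) * (α + 1) / α ^ 2) := by
  have hα0 : 0 < α := by linarith
  set c := (α - 1) / α with hc
  have hαc : α * c = α - 1 := by rw [hc]; field_simp
  have hc0 : 0 ≤ c := div_nonneg (by linarith) hα0.le
  have hc1 : c ≤ 1 := (div_le_one hα0).2 (by linarith)
  have hsign (x y : ℝ) :
      Real.sign (-(α - 1) + (α - 1) * x + α * y) = Real.sign (y - c * (1 - x)) := by
    rw [← Real.sign_mul_of_pos hα0 (y - c * (1 - x))]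
    congr 1
    linear_combination (1 - x) * hαc
  change ∫ p in refTriangle, _ = _
  simp only [hsign]
  rw [integral_refTriangle_eq (isCompact_refTriangle.integrableOn_sign_mul
    (by fun_prop) (by fun_prop))]
  calc ∫ x in (0)..1, ∫ y in (0)..(1 - x), Real.sign (y - c * (1 - x)) * (1 - x - y)
      = ∫ x in (0)..1, (1 - x) ^ 2 * (1 / 2 - 2 * c + c ^ 2) := by
        refine intervalIntegral.integral_congr fun x hx => ?_
        rw [Set.uIcc_of_le zero_le_one] at hx
        rw [integral_sign_sub_mul_sub (mul_nonneg hc0 (by linarith [hx.2]))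
          (mul_le_of_le_one_left (by linarith [hx.2]) hc1)]
        ring
    _ = 1 / 6 - 1 / 3 * ((α - 1) * (α + 1) / α ^ 2) := by
        simp [intervalIntegral.integral_comp_sub_left (fun x => x ^ 2) 1, hc]
        field_simp
        ring
end

section
/- Let $\hat\tau = \{(x,y) : x \ge 0, y \ge 0, x+y \le 1\}$ and $\hat\varphi_0(x,y) = 1-x-y$. For $\alpha > 1$, $\int_{\hat\tau} \mathrm{sgn}\big({-(\alpha-1)} + \alpha x + \alpha y\big)\,\hat\varphi_0(x,y)\,dx\,dy = \frac{1}{6} - \frac{1}{3}\cdot\frac{(\alpha-1)^2(\alpha+2)}{\alpha^3}$. -/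
/-!
Write `c = (α - 1) / α`, so that the argument of the sign is `α (x + y - c)`. Off the null line
`x + y = c` the sign equals `1 - 2 𝟙{x + y ≤ c}`, hence the integral is `∫_{τ̂} φ̂₀ - 2 ∫_{c τ̂} φ̂₀`,
and Fubini gives `∫_{c τ̂} φ̂₀ = c² / 2 - c³ / 3`.
-/

open MeasureTheory Set

lemma Real.sign_mul_left_of_pos {a : ℝ} (ha : 0 < a) (x : ℝ) : Real.sign (a * x) = Real.sign x := by
  rcases lt_trichotomy x 0 with hx | rfl | hx
  · rw [Real.sign_of_neg hx, Real.sign_of_neg (mul_neg_of_pos_of_neg ha hx)]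
  · rw [mul_zero]
  · rw [Real.sign_of_pos hx, Real.sign_of_pos (mul_pos ha hx)]

def triangle (c : ℝ) : Set (ℝ × ℝ) := {p | 0 ≤ p.1 ∧ 0 ≤ p.2 ∧ p.1 + p.2 ≤ c}

lemma isClosed_triangle (c : ℝ) : IsClosed (triangle c) :=
  (isClosed_le continuous_const continuous_fst).inter
    ((isClosed_le continuous_const continuous_snd).inter
      (isClosed_le (continuous_fst.add continuous_snd) continuous_const))

lemma isCompact_triangle (c : ℝ) : IsCompact (triangle c) := by
  refine (isCompact_Icc (a := (0, 0)) (b := (c, c))).of_isClosed_subset (isClosed_triangle c) ?_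
  rintro ⟨x, y⟩ ⟨hx, hy, hxy⟩
  exact ⟨⟨hx, hy⟩, by linarith, by linarith⟩

lemma triangle_inter_setOf_fst_add_snd_le {a b : ℝ} (hab : b ≤ a) :
    triangle a ∩ {p | p.1 + p.2 ≤ b} = triangle b := by
  ext p
  simp only [triangle, mem_inter_iff, mem_ofPred_eq]
  constructor
  · rintro ⟨⟨hx, hy, -⟩, h⟩
    exact ⟨hx, hy, h⟩
  · rintro ⟨hx, hy, h⟩
    exact ⟨⟨hx, hy, h.trans hab⟩, h⟩

lemma triangle_indicator_apply {E : Type*} [Zero E] (f : ℝ × ℝ → E) (c x y : ℝ) :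
    (triangle c).indicator f (x, y) =
      (Icc 0 c).indicator (fun x ↦ (Icc 0 (c - x)).indicator (fun y ↦ f (x, y)) y) x := by
  simp only [indicator, triangle, mem_ofPred_eq, mem_Icc]
  split_ifs <;> first | rfl | grind

lemma setIntegral_triangle_eq_intervalIntegral {f : ℝ × ℝ → ℝ} (hf : Continuous f) {c : ℝ}
    (hc : 0 ≤ c) :
    ∫ p in triangle c, f p = ∫ x in 0..c, ∫ y in 0..(c - x), f (x, y) := by
  have hint : Integrable ((triangle c).indicator f) (volume.prod volume) := by
    rw [← Measure.volume_eq_prod, integrable_indicator_iff (isClosed_triangle c).measurableSet]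
    exact hf.continuousOn.integrableOn_compact (isCompact_triangle c)
  rw [← integral_indicator (isClosed_triangle c).measurableSet, Measure.volume_eq_prod,
    integral_prod _ hint, intervalIntegral.integral_of_le hc, ← integral_Icc_eq_integral_Ioc,
    ← integral_indicator measurableSet_Icc]
  congr 1 with x
  simp only [triangle_indicator_apply]
  by_cases hx : x ∈ Icc 0 c
  · simp only [indicator_of_mem hx, integral_indicator measurableSet_Icc,
      integral_Icc_eq_integral_Ioc, intervalIntegral.integral_of_le (sub_nonneg.2 hx.2)]
  · simp [indicator_of_notMem hx]

lemma setIntegral_triangle_one_sub_fst_sub_snd {c : ℝ} (hc : 0 ≤ c) :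
    ∫ p in triangle c, (1 - p.1 - p.2) = c ^ 2 / 2 - c ^ 3 / 3 := by
  have inner (x : ℝ) : ∫ y in 0..(c - x), (1 - x - y) = (1 - c) * (c - x) + (c - x) ^ 2 / 2 := by
    rw [intervalIntegral.integral_sub intervalIntegrable_const
      intervalIntegral.intervalIntegrable_id, intervalIntegral.integral_const, integral_id,
      smul_eq_mul]
    ring
  rw [setIntegral_triangle_eq_intervalIntegral (by fun_prop) hc]
  simp only [inner]
  rw [intervalIntegral.integral_comp_sub_left (fun u ↦ (1 - c) * u + u ^ 2 / 2),
    intervalIntegral.integral_add (intervalIntegral.intervalIntegrable_id.const_mul _)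
      ((intervalIntegral.intervalIntegrable_pow 2).div_const 2), intervalIntegral.integral_const_mul,
    intervalIntegral.integral_div, integral_id, integral_pow]
  ring

lemma volume_setOf_fst_add_snd_eq (c : ℝ) : volume {p : ℝ × ℝ | p.1 + p.2 = c} = 0 := by
  rw [Measure.volume_eq_prod,
    Measure.prod_apply (measurableSet_eq_fun (by fun_prop) measurable_const)]
  have hfiber (x : ℝ) : Prod.mk x ⁻¹' {p : ℝ × ℝ | p.1 + p.2 = c} = {c - x} := by
    ext y
    simp only [mem_preimage, mem_ofPred_eq, mem_singleton_iff]
    constructor <;> intro h <;> linarith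
  simp [hfiber]

lemma setIntegral_sign_fst_add_snd_sub_mul {S : Set (ℝ × ℝ)} {f : ℝ × ℝ → ℝ}
    (hf : IntegrableOn f S) (c : ℝ) :
    ∫ p in S, Real.sign (p.1 + p.2 - c) * f p =
      (∫ p in S, f p) - 2 * ∫ p in S ∩ {p | p.1 + p.2 ≤ c}, f p := by
  set A := {p : ℝ × ℝ | p.1 + p.2 ≤ c}
  have hA : MeasurableSet A := measurableSet_le (by fun_prop) measurable_const
  have hae : ∀ᵐ p : ℝ × ℝ, Real.sign (p.1 + p.2 - c) * f p = f p - 2 * A.indicator f p := by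
    filter_upwards [measure_eq_zero_iff_ae_notMem.mp (volume_setOf_fst_add_snd_eq c)] with p hp
    rcases lt_or_gt_of_ne hp with h | h
    · rw [Real.sign_of_neg (by linarith), indicator_of_mem (show p ∈ A from h.le)]
      ring
    · rw [Real.sign_of_pos (by linarith), indicator_of_notMem (show p ∉ A from not_le.2 h)]
      ring
  rw [integral_congr_ae (ae_restrict_of_ae hae), integral_sub hf ((hf.indicator hA).const_mul 2),
    integral_const_mul, setIntegral_indicator hA]

theorem stmt17 (α : ℝ) (hα : 1 < α) :
    (∫ p in {p : ℝ × ℝ | 0 ≤ p.1 ∧ 0 ≤ p.2 ∧ p.1 + p.2 ≤ 1},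
        Real.sign (-(α - 1) + α * p.1 + α * p.2) * (1 - p.1 - p.2)) =
      1 / 6 - 1 / 3 * ((α - 1) ^ 2 * (α + 2) / α ^ 3) := by
  have hα0 : 0 < α := by linarith
  set c := (α - 1) / α with hc
  have hc0 : 0 ≤ c := div_nonneg (by linarith) hα0.le
  have hc1 : c ≤ 1 := div_le_one_of_le₀ (by linarith) hα0.le
  have hsign (p : ℝ × ℝ) :
      Real.sign (-(α - 1) + α * p.1 + α * p.2) = Real.sign (p.1 + p.2 - c) := by
    rw [show -(α - 1) + α * p.1 + α * p.2 = α * (p.1 + p.2 - c) by rw [hc]; field_simp; ring,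
      Real.sign_mul_left_of_pos hα0]
  simp_rw [hsign]
  change ∫ p in triangle 1, _ = _
  rw [setIntegral_sign_fst_add_snd_sub_mul
      ((by fun_prop : Continuous fun p : ℝ × ℝ ↦ 1 - p.1 - p.2).continuousOn.integrableOn_compact
        (isCompact_triangle 1)) c,
    triangle_inter_setOf_fst_add_snd_le hc1, setIntegral_triangle_one_sub_fst_sub_snd zero_le_one,
    setIntegral_triangle_one_sub_fst_sub_snd hc0, hc]
  field_simp
  ring
end

section
/- Let $1 < q < \infty$ and $h \in (0,1)$. Suppose $\alpha_q > 1$ satisfies $-(1-h)\alpha_q^2 q(\alpha_q-1)^{q-1} - h(\alpha_q q+1)(\alpha_q-1)^q + h = 0$. Then as $q \to 1^+$, every limit point $\alpha^*$ of $\alpha_q$ with $\alpha^* \ge 1$ satisfies: $\alpha^* = 1$ if $h \le 1/2$, and $\alpha^* = \sqrt{2h}$ if $h > 1/2$. -/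
open Filter

theorem stmt18 (h : ℝ) (hh0 : 0 < h) (hh1 : h < 1)
    (q a : ℕ → ℝ) (hq : ∀ n, 1 < q n)
    (hql : Filter.Tendsto q Filter.atTop (nhds 1))
    (ha : ∀ n, 1 < a n)
    (heq : ∀ n, -(1 - h) * (a n) ^ 2 * q n * (a n - 1) ^ (q n - 1)
      - h * (a n * q n + 1) * (a n - 1) ^ (q n) + h = 0)
    (α : ℝ) (hal : Filter.Tendsto a Filter.atTop (nhds α)) (hα1 : 1 ≤ α) :
    (h ≤ 1 / 2 → α = 1) ∧ (1 / 2 < h → α = Real.sqrt (2 * h)) := by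
  -- Key fact 1: if α > 1 then α ^ 2 = 2 * h
  have key1 : 1 < α → α ^ 2 = 2 * h := by
    intro hα
    have hne : α - 1 ≠ 0 := by linarith
    have hsub : Tendsto (fun n => a n - 1) atTop (nhds (α - 1)) := hal.sub_const 1
    have hqsub : Tendsto (fun n => q n - 1) atTop (nhds 0) := by
      simpa using hql.sub_const 1
    have hpow1 : Tendsto (fun n => (a n - 1) ^ (q n - 1)) atTop (nhds 1) := by
      simpa [Real.rpow_zero] using hsub.rpow hqsub (Or.inl hne)
    have hpow2 : Tendsto (fun n => (a n - 1) ^ (q n)) atTop (nhds (α - 1)) := by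
      simpa [Real.rpow_one] using hsub.rpow hql (Or.inl hne)
    have t1 : Tendsto (fun n => -(1 - h) * (a n) ^ 2 * q n * (a n - 1) ^ (q n - 1))
        atTop (nhds (-(1 - h) * α ^ 2 * 1 * 1)) :=
      ((tendsto_const_nhds.mul (hal.pow 2)).mul hql).mul hpow1
    have t2 : Tendsto (fun n => h * (a n * q n + 1) * (a n - 1) ^ (q n))
        atTop (nhds (h * (α * 1 + 1) * (α - 1))) :=
      (tendsto_const_nhds.mul ((hal.mul hql).add_const 1)).mul hpow2
    have T : Tendsto (fun n => -(1 - h) * (a n) ^ 2 * q n * (a n - 1) ^ (q n - 1)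
        - h * (a n * q n + 1) * (a n - 1) ^ (q n) + h) atTop
        (nhds (-(1 - h) * α ^ 2 * 1 * 1 - h * (α * 1 + 1) * (α - 1) + h)) :=
      (t1.sub t2).add_const h
    have T0 : Tendsto (fun n => -(1 - h) * (a n) ^ 2 * q n * (a n - 1) ^ (q n - 1)
        - h * (a n * q n + 1) * (a n - 1) ^ (q n) + h) atTop (nhds 0) :=
      (tendsto_const_nhds : Tendsto (fun _ : ℕ => (0:ℝ)) atTop (nhds 0)).congr
        (fun n => (heq n).symm)
    have hL : -(1 - h) * α ^ 2 * 1 * 1 - h * (α * 1 + 1) * (α - 1) + h = 0 :=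
      tendsto_nhds_unique T T0
    nlinarith [hL]
  -- Key fact 2: if α = 1 then h ≤ 1/2
  have key2 : α = 1 → h ≤ 1 / 2 := by
    intro hα
    -- decomposition h = (a-1)^(q-1) * D
    have hD : ∀ n, h = (a n - 1) ^ (q n - 1)
        * ((1 - h) * (a n) ^ 2 * q n + h * (a n * q n + 1) * (a n - 1)) := by
      intro n
      have hpos : (0:ℝ) < a n - 1 := by linarith [ha n]
      have hsplit : (a n - 1) ^ (q n) = (a n - 1) ^ (q n - 1) * (a n - 1) := by
        have := Real.rpow_add hpos (q n - 1) 1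
        simpa [Real.rpow_one] using this
      have he := heq n
      rw [hsplit] at he
      ring_nf
      ring_nf at he
      linarith [he]
    -- D tends to 1 - h
    have hDlim : Tendsto (fun n => (1 - h) * (a n) ^ 2 * q n
        + h * (a n * q n + 1) * (a n - 1)) atTop
        (nhds ((1 - h) * α ^ 2 * 1 + h * (α * 1 + 1) * (α - 1))) :=
      ((tendsto_const_nhds.mul (hal.pow 2)).mul hql).add
        ((tendsto_const_nhds.mul ((hal.mul hql).add_const 1)).mul (hal.sub_const 1))
    rw [hα] at hDlim
    norm_num at hDlim
    -- eventually a n < 2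
    have hev : ∀ᶠ n in atTop, a n < 2 := by
      have : α < 2 := by rw [hα]; norm_num
      exact hal.eventually_lt_const this
    have hev2 : ∀ᶠ n in atTop, h ≤ (1 - h) * (a n) ^ 2 * q n
        + h * (a n * q n + 1) * (a n - 1) := by
      filter_upwards [hev] with n hn
      have hpos : (0:ℝ) < a n - 1 := by linarith [ha n]
      have hqn := hq n
      have ht1 : (a n - 1) ^ (q n - 1) < 1 :=
        Real.rpow_lt_one (by linarith) (by linarith) (by linarith)
      have ht0 : (0:ℝ) < (a n - 1) ^ (q n - 1) := Real.rpow_pos_of_pos hpos _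
      have hDpos : (0:ℝ) < (1 - h) * (a n) ^ 2 * q n
          + h * (a n * q n + 1) * (a n - 1) := by
        have ha0 : (0:ℝ) < a n := by linarith [ha n]
        have h1 : (0:ℝ) < (1 - h) * (a n) ^ 2 * q n :=
          mul_pos (mul_pos (by linarith) (pow_pos ha0 2)) (by linarith [hq n])
        have h2 : (0:ℝ) ≤ h * (a n * q n + 1) * (a n - 1) := by
          have hmq : (0:ℝ) < a n * q n := mul_pos ha0 (by linarith)
          exact mul_nonneg (mul_nonneg hh0.le (by linarith)) (le_of_lt hpos)
        linarith
      have := hD n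
      nlinarith
    have : h ≤ 1 - h := ge_of_tendsto hDlim hev2
    linarith
  constructor
  · intro hhalf
    by_contra hne
    have hα : 1 < α := lt_of_le_of_ne hα1 (Ne.symm hne)
    have := key1 hα
    nlinarith
  · intro hhalf
    have hα : 1 < α := by
      rcases lt_or_eq_of_le hα1 with h' | h'
      · exact h'
      · exact absurd (key2 h'.symm) (by linarith)
    have hsq := key1 hα
    have : α = Real.sqrt (α ^ 2) := (Real.sqrt_sq (by linarith)).symm
    rw [this, hsq]
end
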